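/- arXiv:2308.16837 — 3 statements merged into one kernel-verified Lean document; each statement's English description precedes it below -/
import Mathlib

section
/- For any graph G of order n and size m, χ_{×2}(G) ≥ m/n + 1/2, i.e., χ_{×2}(G) ≥ (1 + 2m/n)/2. -/
open SimpleGraph

/-- The closed neighborhood `N[v]` of a vertex. -/
def closedNbhd {V : Type*} (G : SimpleGraph V) (v : V) : Set V :=
  insert v (G.neighborSet v)

/-- `B` is a `k`-limited packing: every closed neighborhood contains at most `k` vertices of `B`. -/
def IsLimitedPacking {V : Type*} (G : SimpleGraph V) (k : ℕ) (B : Set V) : Prop :=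
  ∀ v : V, (B ∩ closedNbhd G v).ncard ≤ k

/-- `P` is a partition of the vertex set of `G` into `k`-limited packing sets. -/
def IsLPPartition {V : Type*} (G : SimpleGraph V) (k : ℕ) (P : Finset (Set V)) : Prop :=
  (∀ B ∈ P, IsLimitedPacking G k B) ∧ (∀ v : V, ∃! B : Set V, B ∈ P ∧ v ∈ B)

/-- The `k`-limited packing partition number `χ_{×k}(G)`: minimum number of parts in a
partition of the vertex set into `k`-limited packing sets. -/
noncomputable def chiLP {V : Type*} (G : SimpleGraph V) (k : ℕ) : ℕ :=
  sInf {n | ∃ P : Finset (Set V), IsLPPartition G k P ∧ P.card = n}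

/-
A closed neighborhood `N[v]` has `deg v + 1` vertices, and each of the `χ` parts of an optimal
partition meets it in at most two of them, so `deg v + 1 ≤ 2χ`. Summing over all `n` vertices
and using the handshake lemma gives `2m + n ≤ 2χn`.
-/

section

variable {V : Type*} (G : SimpleGraph V)

theorem ncard_closedNbhd (v : V) [Fintype (G.neighborSet v)] :
    (closedNbhd G v).ncard = G.degree v + 1 := by
  rw [closedNbhd, Set.ncard_insert_of_notMem G.notMem_neighborSet_self,
    Set.ncard_eq_toFinset_card', ← neighborFinset_def, card_neighborFinset_eq_degree]

theorem isLPPartition_singletons [Fintype V] {k : ℕ} (hk : 1 ≤ k) :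
    IsLPPartition G k (Finset.univ.map ⟨singleton, Set.singleton_injective⟩) := by
  refine ⟨?_, fun v => ⟨{v}, by simp, ?_⟩⟩
  · simp only [Finset.mem_map, Finset.mem_univ, true_and, Function.Embedding.coeFn_mk]
    rintro _ ⟨u, rfl⟩ v
    exact (Set.ncard_le_ncard Set.inter_subset_left).trans (by simpa using hk)
  · simp

theorem exists_isLPPartition_card_eq_chiLP [Fintype V] {k : ℕ} (hk : 1 ≤ k) :
    ∃ P, IsLPPartition G k P ∧ P.card = chiLP G k :=
  Nat.sInf_mem (s := {n | ∃ P : Finset (Set V), IsLPPartition G k P ∧ P.card = n})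
    ⟨_, _, isLPPartition_singletons G hk, rfl⟩

namespace IsLPPartition

variable {G} {k : ℕ} {P : Finset (Set V)}

theorem biUnion_eq_univ (hP : IsLPPartition G k P) : ⋃ B ∈ P, B = Set.univ :=
  Set.eq_univ_of_forall fun v =>
    let ⟨_, ⟨hBP, hvB⟩, _⟩ := hP.2 v
    Set.mem_biUnion hBP hvB

theorem degree_add_one_le (hP : IsLPPartition G k P) (v : V) [Fintype (G.neighborSet v)] :
    G.degree v + 1 ≤ k * P.card := by
  have hcover : ⋃ B ∈ P, B ∩ closedNbhd G v = closedNbhd G v := by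
    rw [← Set.iUnion₂_inter, hP.biUnion_eq_univ, Set.univ_inter]
  calc G.degree v + 1 = (⋃ B ∈ P, B ∩ closedNbhd G v).ncard := by rw [hcover, ncard_closedNbhd]
    _ ≤ ∑ B ∈ P, (B ∩ closedNbhd G v).ncard := P.set_ncard_biUnion_le _
    _ ≤ ∑ _B ∈ P, k := Finset.sum_le_sum fun B hB => hP.1 B hB v
    _ = k * P.card := by rw [Finset.sum_const, smul_eq_mul, mul_comm]

theorem two_mul_card_edgeFinset_add_card_le [Fintype V] [DecidableRel G.Adj]
    (hP : IsLPPartition G k P) :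
    2 * G.edgeFinset.card + Fintype.card V ≤ k * P.card * Fintype.card V :=
  calc 2 * G.edgeFinset.card + Fintype.card V = ∑ v, (G.degree v + 1) := by
        rw [Finset.sum_add_distrib, sum_degrees_eq_twice_card_edges, Finset.sum_const,
          Finset.card_univ, smul_eq_mul, mul_one]
    _ ≤ ∑ _v : V, k * P.card := Finset.sum_le_sum fun v _ => hP.degree_add_one_le v
    _ = k * P.card * Fintype.card V := by
        rw [Finset.sum_const, Finset.card_univ, smul_eq_mul, mul_comm]

end IsLPPartition

end

theorem chiLP_two_ge_general {V : Type*} [Fintype V] [Nonempty V]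
    (G : SimpleGraph V) [DecidableRel G.Adj] :
    (G.edgeFinset.card : ℚ) / (Fintype.card V) + 1 / 2 ≤ chiLP G 2 := by
  obtain ⟨P, hP, hcard⟩ := exists_isLPPartition_card_eq_chiLP G one_le_two
  have hn : (0 : ℚ) < Fintype.card V := mod_cast Fintype.card_pos
  have hsum : (2 * G.edgeFinset.card + Fintype.card V : ℚ) ≤ 2 * chiLP G 2 * Fintype.card V := by
    exact_mod_cast hcard ▸ hP.two_mul_card_edgeFinset_add_card_le
  calc (G.edgeFinset.card : ℚ) / Fintype.card V + 1 / 2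
      = (2 * G.edgeFinset.card + Fintype.card V) / (2 * Fintype.card V) := by field_simp
    _ ≤ chiLP G 2 := by rw [div_le_iff₀ (by positivity)]; linarith

/-- For a graph `G` of order `n` and size `m`, `χ_{×2}(G) ≥ m/n + 1/2`. -/
theorem chiLP_two_ge {V : Type*} [Fintype V] [DecidableEq V] [Nonempty V]
    (G : SimpleGraph V) [DecidableRel G.Adj] :
    (G.edgeFinset.card : ℚ) / (Fintype.card V) + 1 / 2 ≤ chiLP G 2 :=
  chiLP_two_ge_general G
end

section
/- Let H be the graph obtained from the complete graph K_{2p} (p ≥ 3) by removing a perfect matching. Then L₂(H) = 2 and χ_{×2}(H) = p, and consequently χ_{×2}(H) + χ_{×2}(H̄) = p + 1 = (|V(H)|+2)/2. -/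
open SimpleGraph

/-- The `2`-limited packing number `L₂(G)`: maximum size of a `2`-limited packing. -/
noncomputable def L2 {V : Type*} (G : SimpleGraph V) : ℕ :=
  sSup {n | ∃ B : Set V, IsLimitedPacking G 2 B ∧ B.ncard = n}

/-- The perfect matching graph on `2p` vertices: `(i, b)` is adjacent to `(i, ¬b)`. -/
def matchingGraph (p : ℕ) : SimpleGraph (Fin p × Bool) where
  Adj x y := x.1 = y.1 ∧ x ≠ y
  symm := by
    constructor
    rintro ⟨a, b⟩ ⟨c, d⟩ ⟨h1, h2⟩
    exact ⟨h1.symm, fun h => h2 h.symm⟩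
  loopless := by
    constructor
    rintro ⟨a, b⟩ ⟨h1, h2⟩
    exact h2 rfl

/-!
In `H = K_{2p}` minus a perfect matching, the closed neighbourhood of `v` is everything but
the partner of `v`. So a 2-limited packing `B` with three vertices must contain the partner of
every vertex, i.e. `B = V(H)`; but then `N[v] ∩ B` has `2p - 1 ≥ 3` vertices. Hence
`L₂(H) = 2`, every part of a 2-limited packing partition has at most two vertices, and the `p`
matching edges give an optimal partition. In `H̄` every closed neighbourhood is a matching
edge, so `V(H̄)` itself is a 2-limited packing.
-/

section LimitedPacking

variable {V : Type*} {G : SimpleGraph V} {k : ℕ}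

lemma closedNbhd_compl (G : SimpleGraph V) (v : V) :
    closedNbhd Gᶜ v = (G.neighborSet v)ᶜ := by
  ext x
  by_cases hx : x = v
  · subst hx; simp [closedNbhd]
  · simp [closedNbhd, hx, Ne.symm hx]

lemma IsLimitedPacking.of_ncard_le {B : Set V} (hfin : B.Finite) (h : B.ncard ≤ k) :
    IsLimitedPacking G k B := fun _ =>
  (Set.ncard_le_ncard Set.inter_subset_left hfin).trans h

lemma IsLimitedPacking.ncard_le_of_disjoint_neighborSet {B : Set V}
    (hB : IsLimitedPacking Gᶜ k B) {v : V} (hv : Disjoint B (G.neighborSet v)) :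
    B.ncard ≤ k := by
  simpa only [closedNbhd_compl, ← Set.sdiff_eq, hv.sdiff_eq_left] using hB v

lemma L2_eq {B : Set V} {n : ℕ} (hB : IsLimitedPacking G 2 B) (hcard : B.ncard = n)
    (hmax : ∀ C, IsLimitedPacking G 2 C → C.ncard ≤ n) : L2 G = n := by
  have hub : n ∈ upperBounds {n | ∃ C : Set V, IsLimitedPacking G 2 C ∧ C.ncard = n} := by
    rintro _ ⟨C, hC, rfl⟩
    exact hmax C hC
  exact le_antisymm (csSup_le ⟨n, B, hB, hcard⟩ hub) (le_csSup ⟨n, hub⟩ ⟨B, hB, hcard⟩)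

lemma IsLPPartition.nonempty [Nonempty V] {P : Finset (Set V)} (hP : IsLPPartition G k P) :
    P.Nonempty :=
  let ⟨B, ⟨hB, _⟩, _⟩ := hP.2 (Classical.arbitrary V)
  ⟨B, hB⟩

lemma IsLPPartition.card_le_mul_card [Fintype V] {P : Finset (Set V)} {m : ℕ}
    (hP : IsLPPartition G k P) (hm : ∀ B ∈ P, B.ncard ≤ m) :
    Fintype.card V ≤ m * P.card := by
  classical
  choose part hpart _ using hP.2
  refine Finset.card_le_mul_card_image_of_maps_to (fun v _ => (hpart v).1) m fun B hB => ?_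
  calc (Finset.univ.filter fun v => part v = B).card
      ≤ B.toFinset.card := Finset.card_le_card fun v hv => by
        simpa [← (Finset.mem_filter.1 hv).2] using (hpart v).2
    _ = B.ncard := (Set.ncard_eq_toFinset_card' B).symm
    _ ≤ m := hm B hB

lemma chiLP_eq {P : Finset (Set V)} {n : ℕ} (hP : IsLPPartition G k P) (hcard : P.card = n)
    (hmin : ∀ Q, IsLPPartition G k Q → n ≤ Q.card) : chiLP G k = n :=
  le_antisymm (Nat.sInf_le ⟨P, hP, hcard⟩)
    (le_csInf ⟨n, P, hP, hcard⟩ (by rintro _ ⟨Q, hQ, rfl⟩; exact hmin Q hQ))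

lemma isLPPartition_image_fibers {ι : Type*} [Fintype ι] [DecidableEq (Set V)] (f : V → ι)
    (h : ∀ i, IsLimitedPacking G k (f ⁻¹' {i})) :
    IsLPPartition G k (Finset.univ.image fun i => f ⁻¹' {i}) := by
  refine ⟨by simpa using h, fun v => ⟨f ⁻¹' {f v}, ⟨by simp, rfl⟩, ?_⟩⟩
  rintro B ⟨hB, hvB⟩
  obtain ⟨i, -, rfl⟩ := Finset.mem_image.1 hB
  rw [show f v = i from hvB]

end LimitedPacking

lemma ncard_preimage_fst_singleton {α β : Type*} (a : α) :
    (Prod.fst ⁻¹' {a} : Set (α × β)).ncard = Nat.card β := by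
  rw [← Set.prod_univ, Set.ncard_prod, Set.ncard_singleton, Set.ncard_univ, one_mul]

lemma isLimitedPacking_preimage_fst_singleton {α : Type*} [Finite α]
    (G : SimpleGraph (α × Bool)) (a : α) :
    IsLimitedPacking G 2 (Prod.fst ⁻¹' {a}) :=
  .of_ncard_le (Set.toFinite _) (by simp [ncard_preimage_fst_singleton])

namespace matchingGraph

variable {p : ℕ}

lemma neighborSet_eq (v : Fin p × Bool) :
    (matchingGraph p).neighborSet v = {(v.1, !v.2)} := by
  obtain ⟨i, b⟩ := v
  ext ⟨j, c⟩
  cases b <;> cases c <;> simp [matchingGraph, eq_comm]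

lemma closedNbhd_eq (v : Fin p × Bool) :
    closedNbhd (matchingGraph p) v = Prod.fst ⁻¹' {v.1} := by
  obtain ⟨i, b⟩ := v
  ext ⟨j, c⟩
  cases b <;> cases c <;> simp [closedNbhd, neighborSet_eq, eq_comm]

lemma ncard_le_two_of_isLimitedPacking_compl (hp : 2 ≤ p) {B : Set (Fin p × Bool)}
    (hB : IsLimitedPacking (matchingGraph p)ᶜ 2 B) : B.ncard ≤ 2 := by
  by_cases hB_univ : B = Set.univ
  · have h := hB (⟨0, by omega⟩, false)
    rw [hB_univ, Set.univ_inter, closedNbhd_compl, neighborSet_eq, Set.ncard_compl,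
      Set.ncard_singleton, Nat.card_eq_fintype_card, Fintype.card_prod, Fintype.card_fin,
      Fintype.card_bool] at h
    omega
  · obtain ⟨x, hx⟩ := (Set.ne_univ_iff_exists_notMem B).1 hB_univ
    refine hB.ncard_le_of_disjoint_neighborSet (v := (x.1, !x.2)) ?_
    simpa [neighborSet_eq] using hx

lemma L2_compl (hp : 2 ≤ p) : L2 (matchingGraph p)ᶜ = 2 :=
  L2_eq (isLimitedPacking_preimage_fst_singleton _ ⟨0, by omega⟩)
    (by simp [ncard_preimage_fst_singleton])
    fun _ hC => ncard_le_two_of_isLimitedPacking_compl hp hC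

lemma chiLP_compl (hp : 2 ≤ p) : chiLP (matchingGraph p)ᶜ 2 = p := by
  classical
  have hinj : Function.Injective fun i : Fin p => (Prod.fst ⁻¹' {i} : Set (Fin p × Bool)) :=
    Prod.fst_surjective.preimage_injective.comp Set.singleton_injective
  refine chiLP_eq (isLPPartition_image_fibers Prod.fst (isLimitedPacking_preimage_fst_singleton _))
    (by rw [Finset.card_image_of_injective _ hinj, Finset.card_univ, Fintype.card_fin])
    fun Q hQ => ?_
  have := hQ.card_le_mul_card fun B hB => ncard_le_two_of_isLimitedPacking_compl hp (hQ.1 B hB)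
  rw [Fintype.card_prod, Fintype.card_fin, Fintype.card_bool] at this
  omega

lemma chiLP_eq_one (hp : 0 < p) : chiLP (matchingGraph p) 2 = 1 := by
  have : NeZero p := ⟨hp.ne'⟩
  have hpack : IsLimitedPacking (matchingGraph p) 2 Set.univ := fun v => by
    simp [closedNbhd_eq, ncard_preimage_fst_singleton]
  exact chiLP_eq (P := {Set.univ})
    ⟨by simpa using hpack, fun v => ⟨Set.univ, by simp, by simp⟩⟩
    (Finset.card_singleton _) fun Q hQ => hQ.nonempty.card_pos

end matchingGraph

/-- Let `H` be `K_{2p}` (`p ≥ 3`) minus a perfect matching. Then `L₂(H) = 2`,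
`χ_{×2}(H) = p`, and `χ_{×2}(H) + χ_{×2}(H̄) = p + 1 = (|V(H)| + 2)/2`. -/
theorem matching_complement_chiLP (p : ℕ) (hp : 3 ≤ p) :
    L2 (matchingGraph p)ᶜ = 2 ∧ chiLP (matchingGraph p)ᶜ 2 = p ∧
      chiLP (matchingGraph p)ᶜ 2 + chiLP ((matchingGraph p)ᶜ)ᶜ 2 = p + 1 ∧
      p + 1 = (Fintype.card (Fin p × Bool) + 2) / 2 := by
  refine ⟨matchingGraph.L2_compl (by omega), matchingGraph.chiLP_compl (by omega), ?_, ?_⟩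
  · rw [compl_compl, matchingGraph.chiLP_compl (by omega), matchingGraph.chiLP_eq_one (by omega)]
  · simp only [Fintype.card_prod, Fintype.card_fin, Fintype.card_bool]
    omega
end

section
/- For any graph G of order n that is not isomorphic to the 5-cycle C₅, L_{2,t}(G) + L_{2,t}(Ḡ) ≤ n + 4, where Ḡ denotes the complement of G. -/
open SimpleGraph

/-- `B` is a `k`-total limited packing: every open neighborhood contains at most `k`
vertices of `B`. -/
def IsTotalLimitedPacking {V : Type*} (G : SimpleGraph V) (k : ℕ) (B : Set V) : Prop :=
  ∀ v : V, (B ∩ G.neighborSet v).ncard ≤ k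

/-- The `2`-total limited packing number `L_{2,t}(G)`. -/
noncomputable def L2t {V : Type*} (G : SimpleGraph V) : ℕ :=
  sSup {n | ∃ B : Set V, IsTotalLimitedPacking G 2 B ∧ B.ncard = n}

/-! Let `B₁`, `B₂` be maximum 2-total limited packings of `G` and `Gᶜ`. Every vertex `v` other than
`u` lies in `N_G(u)` or in `N_Gᶜ(u)`, each of which meets `B₁` resp. `B₂` in at most two vertices,
so `|(B₁ ∩ B₂) \ {u}| ≤ 4` for every `u`. Hence `|B₁ ∩ B₂| ≤ 4`, giving
`L_{2,t}(G) + L_{2,t}(Gᶜ) = |B₁ ∪ B₂| + |B₁ ∩ B₂| ≤ n + 4`, unless `B₁ ∩ B₂` is the whole vertex set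
and has five elements. In that case `B₁ = B₂ = V`, so `G` and `Gᶜ` have maximum degree at most 2 on
five vertices: `G` is 2-regular. Such a graph is connected, so it has neither triangles nor
4-cycles, and it is `C₅`. -/

theorem Set.eq_univ_of_forall_ncard_sdiff_singleton_le {α : Type*} {s : Set α} {m : ℕ}
    (h : ∀ a, (s \ {a}).ncard ≤ m) (hm : m < s.ncard) : s = Set.univ :=
  Set.eq_univ_of_forall fun a => by_contra fun ha => by
    have := h a
    rw [Set.sdiff_singleton_eq_self ha] at this
    omega

namespace SimpleGraph

theorem nonempty_iso_cycleGraph_of_adj_iff {V : Type*} {G : SimpleGraph V} {n : ℕ}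
    (f : Fin (n + 2) ≃ V) (hf : ∀ i x, G.Adj (f i) x ↔ x = f (i - 1) ∨ x = f (i + 1)) :
    Nonempty (G ≃g cycleGraph (n + 2)) :=
  ⟨RelIso.symm ⟨f, fun {i j} => by
    rw [hf, f.injective.eq_iff, f.injective.eq_iff, ← mem_neighborSet, cycleGraph_neighborSet]
    simp⟩⟩

section Finite

open Finset

variable {V : Type*} [Fintype V] {G : SimpleGraph V} [DecidableRel G.Adj]

theorem ncard_neighborSet_eq_degree (v : V) : (G.neighborSet v).ncard = G.degree v := by
  rw [Set.ncard_eq_toFinset_card', Set.toFinset_card, card_neighborSet_eq_degree]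

variable [DecidableEq V]

/-- A nonempty set closed under adjacency and its nonempty complement would each contain a closed
neighbourhood, of size at least `k + 1`. -/
theorem eq_univ_of_forall_adj_mem {k : ℕ} (hdeg : ∀ v, k ≤ G.degree v)
    (hcard : Fintype.card V < 2 * k + 2) {S : Finset V} (hne : S.Nonempty)
    (hS : ∀ x ∈ S, ∀ y, G.Adj x y → y ∈ S) : S = univ := by
  by_contra hSu
  obtain ⟨x, hx⟩ : ∃ x, x ∉ S := by simpa [eq_univ_iff_forall] using hSu
  obtain ⟨s, hs⟩ := hne
  have hle : ∀ v (T : Finset V), insert v (G.neighborFinset v) ⊆ T → k + 1 ≤ #T := fun v T hT =>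
    calc k + 1 ≤ #(insert v (G.neighborFinset v)) := by
          rw [card_insert_of_notMem (by simp), card_neighborFinset_eq_degree]
          exact Nat.add_le_add_right (hdeg v) 1
      _ ≤ #T := card_le_card hT
  have hS' := hle s S (insert_subset hs fun y hy => hS s hs y ((mem_neighborFinset ..).mp hy))
  have hSc := hle x Sᶜ <| insert_subset (mem_compl.mpr hx) fun y hy =>
    mem_compl.mpr fun hyS => hx (hS y hyS x ((mem_neighborFinset ..).mp hy).symm)
  have := S.card_add_card_compl
  omega

theorem exists_adj_iff_of_degree_eq_two {v u : V} (hv : G.degree v = 2) (hu : G.Adj v u) :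
    ∃ w, w ≠ u ∧ ∀ x, G.Adj v x ↔ x = u ∨ x = w := by
  obtain ⟨p, q, hpq, hN⟩ := card_eq_two.mp ((card_neighborFinset_eq_degree G v).trans hv)
  have hadj : ∀ x, G.Adj v x ↔ x = p ∨ x = q := fun x => by
    rw [← mem_neighborFinset, hN, mem_insert, mem_singleton]
  rcases (hadj u).mp hu with rfl | rfl
  · exact ⟨q, hpq.symm, hadj⟩
  · exact ⟨p, hpq, fun x => (hadj x).trans or_comm⟩

theorem adj_iff_of_degree_eq_two {v u w : V} (hv : G.degree v = 2) (hu : G.Adj v u)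
    (hw : G.Adj v w) (huw : u ≠ w) (x : V) : G.Adj v x ↔ x = u ∨ x = w := by
  obtain ⟨w', -, hN⟩ := exists_adj_iff_of_degree_eq_two hv hu
  obtain rfl : w = w' := ((hN w).mp hw).resolve_left huw.symm
  exact hN x

namespace IsRegularOfDegree

theorem five_le_card_of_forall_adj_mem (hcard : Fintype.card V = 5)
    (hreg : G.IsRegularOfDegree 2) {S : Finset V} (hne : S.Nonempty)
    (hS : ∀ x ∈ S, ∀ y, G.Adj x y → y ∈ S) : 5 ≤ #S := by
  rw [eq_univ_of_forall_adj_mem (k := 2) (fun v => (hreg v).ge) (by omega) hne hS, card_univ,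
    hcard]

theorem cliqueFree_three (hcard : Fintype.card V = 5) (hreg : G.IsRegularOfDegree 2) :
    G.CliqueFree 3 := by
  intro s hs
  obtain ⟨a, b, c, hab, hac, hbc, rfl⟩ := is3Clique_iff.mp hs
  have hNa := adj_iff_of_degree_eq_two (hreg a) hab hac hbc.ne
  have hNb := adj_iff_of_degree_eq_two (hreg b) hab.symm hbc hac.ne
  have hNc := adj_iff_of_degree_eq_two (hreg c) hac.symm hbc.symm hab.ne
  have := hreg.five_le_card_of_forall_adj_mem hcard (S := {a, b, c}) (by simp)
    (by simp [hNa, hNb, hNc])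
  have := card_le_three (a := a) (b := b) (c := c)
  omega

theorem not_adj_of_adj_of_adj_of_adj (hcard : Fintype.card V = 5)
    (hreg : G.IsRegularOfDegree 2) {a b c d : V} (hab : G.Adj a b) (hbc : G.Adj b c)
    (hcd : G.Adj c d) (hac : a ≠ c) (hbd : b ≠ d) : ¬G.Adj d a := by
  intro hda
  have hNa := adj_iff_of_degree_eq_two (hreg a) hab hda.symm hbd
  have hNb := adj_iff_of_degree_eq_two (hreg b) hab.symm hbc hac
  have hNc := adj_iff_of_degree_eq_two (hreg c) hbc.symm hcd hbd
  have hNd := adj_iff_of_degree_eq_two (hreg d) hcd.symm hda hac.symm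
  have := hreg.five_le_card_of_forall_adj_mem hcard (S := {a, b, c, d}) (by simp)
    (by simp [hNa, hNb, hNc, hNd])
  have := card_le_four (a := a) (b := b) (c := c) (d := d)
  omega

theorem exists_surjective_adj_iff (hcard : Fintype.card V = 5)
    (hreg : G.IsRegularOfDegree 2) : ∃ f : Fin 5 → V, Function.Surjective f ∧
      ∀ i x, G.Adj (f i) x ↔ x = f (i - 1) ∨ x = f (i + 1) := by
  have hno3 := hreg.cliqueFree_three hcard
  obtain ⟨a⟩ : Nonempty V := Fintype.card_pos_iff.mp (by omega)
  obtain ⟨b, hab⟩ := (G.degree_pos_iff_exists_adj a).mp (by rw [hreg a]; omega)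
  obtain ⟨e, heb, hNa⟩ := exists_adj_iff_of_degree_eq_two (hreg a) hab
  have hae : G.Adj a e := (hNa e).mpr (Or.inr rfl)
  obtain ⟨c, hca, hNb⟩ := exists_adj_iff_of_degree_eq_two (hreg b) hab.symm
  have hbc : G.Adj b c := (hNb c).mpr (Or.inr rfl)
  obtain ⟨d, hda, hNe⟩ := exists_adj_iff_of_degree_eq_two (hreg e) hae.symm
  have hed : G.Adj e d := (hNe d).mpr (Or.inr rfl)
  -- `c - b - a - e - d` is a walk; it is a path, and `c` and `d` close it into a 5-cycle
  have hce : c ≠ e := by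
    rintro rfl
    exact hno3 _ (is3Clique_triple_iff.mpr ⟨hab, hae, hbc⟩)
  have hbd : b ≠ d := by
    rintro rfl
    exact hno3 _ (is3Clique_triple_iff.mpr ⟨hab, hae, hed.symm⟩)
  have hcd_ne : c ≠ d := by
    rintro rfl
    exact hreg.not_adj_of_adj_of_adj_of_adj hcard hab hbc hed.symm hca.symm heb.symm hae.symm
  -- besides `a` and its neighbours `b`, `e`, there are only the two non-neighbours `c`, `d` of `a`
  have hall : ∀ x, x = a ∨ x = b ∨ x = c ∨ x = d ∨ x = e := by
    have hNa' := adj_iff_of_degree_eq_two (G := Gᶜ) (by rw [degree_compl, hreg a, hcard])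
      ((compl_adj G a c).mpr ⟨hca.symm, by simp [hNa, hbc.ne', hce]⟩)
      ((compl_adj G a d).mpr ⟨hda.symm, by simp [hNa, hbd.symm, hed.ne']⟩) hcd_ne
    intro x
    by_cases hxa : x = a
    · exact Or.inl hxa
    by_cases hax : G.Adj a x
    · rcases (hNa x).mp hax with h | h <;> simp [h]
    · rcases (hNa' x).mp ((compl_adj G a x).mpr ⟨Ne.symm hxa, hax⟩) with h | h <;> simp [h]
  have hcd : G.Adj c d := by
    obtain ⟨c', hc'b, hNc⟩ := exists_adj_iff_of_degree_eq_two (hreg c) hbc.symm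
    have hcc' : G.Adj c c' := (hNc c').mpr (Or.inr rfl)
    rcases hall c' with rfl | rfl | rfl | rfl | rfl
    · exact absurd ((hNa c).mp hcc'.symm) (by simp [hbc.ne', hce])
    · exact absurd rfl hc'b
    · exact absurd hcc' G.irrefl
    · exact hcc'
    · exact absurd ((hNe c).mp hcc'.symm) (by simp [hca, hcd_ne])
  have hNc := adj_iff_of_degree_eq_two (hreg c) hbc.symm hcd hbd
  have hNd := adj_iff_of_degree_eq_two (hreg d) hcd.symm hed.symm hce
  refine ⟨![a, b, c, d, e], fun x => ?_, fun i x => ?_⟩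
  · rcases hall x with rfl | rfl | rfl | rfl | rfl
    exacts [⟨0, rfl⟩, ⟨1, rfl⟩, ⟨2, rfl⟩, ⟨3, rfl⟩, ⟨4, rfl⟩]
  · fin_cases i
    · simpa [or_comm] using hNa x
    · simpa using hNb x
    · simpa using hNc x
    · simpa using hNd x
    · simpa [or_comm] using hNe x

theorem nonempty_iso_cycleGraph_five (hcard : Fintype.card V = 5)
    (hreg : G.IsRegularOfDegree 2) : Nonempty (G ≃g cycleGraph 5) := by
  obtain ⟨f, hsurj, hf⟩ := hreg.exists_surjective_adj_iff hcard
  have hbij := (Fintype.bijective_iff_surjective_and_card f).mpr ⟨hsurj, by simp [hcard]⟩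
  exact nonempty_iso_cycleGraph_of_adj_iff (.ofBijective f hbij) hf

end IsRegularOfDegree

end Finite

end SimpleGraph
section Packing

variable {V : Type*} {G : SimpleGraph V} {k k₁ k₂ : ℕ} {B₁ B₂ : Set V}

theorem exists_isTotalLimitedPacking_ncard_eq_L2t [Finite V] (G : SimpleGraph V) :
    ∃ B : Set V, IsTotalLimitedPacking G 2 B ∧ B.ncard = L2t G := by
  refine Nat.sSup_mem (s := {n | ∃ B : Set V, IsTotalLimitedPacking G 2 B ∧ B.ncard = n})
    ⟨0, ?_⟩ ⟨Nat.card V, ?_⟩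
  · exact ⟨∅, fun v => by simp, Set.ncard_empty V⟩
  · rintro _ ⟨B, -, rfl⟩
    exact Set.ncard_le_card B

theorem IsTotalLimitedPacking.ncard_inter_sdiff_singleton_le [Finite V]
    (hB₁ : IsTotalLimitedPacking G k₁ B₁) (hB₂ : IsTotalLimitedPacking Gᶜ k₂ B₂) (v : V) :
    ((B₁ ∩ B₂) \ {v}).ncard ≤ k₁ + k₂ := by
  have hsub : (B₁ ∩ B₂) \ {v} ⊆ (B₁ ∩ G.neighborSet v) ∪ (B₂ ∩ Gᶜ.neighborSet v) := by
    rintro u ⟨⟨hu₁, hu₂⟩, huv⟩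
    by_cases h : G.Adj v u
    · exact Or.inl ⟨hu₁, h⟩
    · exact Or.inr ⟨hu₂, (compl_adj G v u).mpr ⟨Ne.symm huv, h⟩⟩
  calc ((B₁ ∩ B₂) \ {v}).ncard
      ≤ ((B₁ ∩ G.neighborSet v) ∪ (B₂ ∩ Gᶜ.neighborSet v)).ncard := Set.ncard_le_ncard hsub
    _ ≤ (B₁ ∩ G.neighborSet v).ncard + (B₂ ∩ Gᶜ.neighborSet v).ncard := Set.ncard_union_le _ _
    _ ≤ k₁ + k₂ := add_le_add (hB₁ v) (hB₂ v)

theorem IsTotalLimitedPacking.eq_univ_of_lt_ncard_inter [Fintype V]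
    (hB₁ : IsTotalLimitedPacking G k₁ B₁) (hB₂ : IsTotalLimitedPacking Gᶜ k₂ B₂)
    (h : k₁ + k₂ < (B₁ ∩ B₂).ncard) :
    B₁ = Set.univ ∧ B₂ = Set.univ ∧ Fintype.card V = k₁ + k₂ + 1 := by
  have hle := hB₁.ncard_inter_sdiff_singleton_le hB₂
  have hI := Set.eq_univ_of_forall_ncard_sdiff_singleton_le hle h
  obtain ⟨v, -⟩ := Set.nonempty_of_ncard_ne_zero (s := B₁ ∩ B₂) (by omega)
  have hv := hle v
  rw [hI, Set.ncard_univ, Nat.card_eq_fintype_card] at h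
  rw [hI, Set.ncard_sdiff_singleton_of_mem (Set.mem_univ v), Set.ncard_univ,
    Nat.card_eq_fintype_card] at hv
  exact ⟨(inf_eq_top_iff.mp hI).1, (inf_eq_top_iff.mp hI).2, by omega⟩

theorem isTotalLimitedPacking_univ_iff [Fintype V] [DecidableRel G.Adj] :
    IsTotalLimitedPacking G k Set.univ ↔ ∀ v, G.degree v ≤ k := by
  simp only [IsTotalLimitedPacking, Set.univ_inter, ncard_neighborSet_eq_degree]

theorem isRegularOfDegree_of_isTotalLimitedPacking_univ [Fintype V] [DecidableEq V]
    [DecidableRel G.Adj] (hcard : Fintype.card V = 2 * k + 1)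
    (hG : IsTotalLimitedPacking G k Set.univ) (hGc : IsTotalLimitedPacking Gᶜ k Set.univ) :
    G.IsRegularOfDegree k := fun v => by
  have h₁ := isTotalLimitedPacking_univ_iff.mp hG v
  have h₂ := isTotalLimitedPacking_univ_iff.mp hGc v
  rw [degree_compl, hcard] at h₂
  omega

end Packing

/-- For any graph `G` of order `n` not isomorphic to the `5`-cycle,
`L_{2,t}(G) + L_{2,t}(Ġ) ≤ n + 4`. -/
theorem L2t_nordhaus_gaddum_strict {V : Type*} [Fintype V] (G : SimpleGraph V)
    (hC5 : ¬ Nonempty (G ≃g SimpleGraph.cycleGraph 5)) :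
    L2t G + L2t Gᶜ ≤ Fintype.card V + 4 := by
  classical
  obtain ⟨B₁, hB₁, h₁⟩ := exists_isTotalLimitedPacking_ncard_eq_L2t G
  obtain ⟨B₂, hB₂, h₂⟩ := exists_isTotalLimitedPacking_ncard_eq_L2t Gᶜ
  rw [← h₁, ← h₂, ← Set.ncard_union_add_ncard_inter]
  refine add_le_add ((Set.ncard_le_card _).trans_eq Nat.card_eq_fintype_card)
    (not_lt.mp fun hI => hC5 ?_)
  obtain ⟨rfl, rfl, hcard⟩ := hB₁.eq_univ_of_lt_ncard_inter hB₂ hI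
  exact IsRegularOfDegree.nonempty_iso_cycleGraph_five hcard
    (isRegularOfDegree_of_isTotalLimitedPacking_univ hcard hB₁ hB₂)
end
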